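/- Let X, Y₀, Y₁, Y be Banach spaces with continuous dense injections Y₁ ⊆ Y ⊆ Y₀, and suppose there exist θ ∈ (0,1) and C > 0 such that ‖y‖_Y ≤ C‖y‖_{Y₀}^θ ‖y‖_{Y₁}^{1−θ} for all y ∈ Y₁. Then for any family T of operators belonging to both L(X,Y₀) and L(X,Y₁), the R-bound in L(X,Y) satisfies R_{L(X,Y)}(T) ≤ C · R_{L(X,Y₀)}(T)^θ · R_{L(X,Y₁)}(T)^{1−θ}. -/

import Mathlib

/-!
On each sign pattern the interpolation inequality bounds the `Y`-norm of a Rademacher sum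
`∑ εⱼ Tⱼ xⱼ` by `C` times the `θ`-th power of its `Y₀`-norm and the `(1 - θ)`-th power of its
`Y₁`-norm. Hölder's inequality with exponents `1/θ` and `1/(1 - θ)` over the sign patterns lifts
this to the `L_p` norms of the random sums, and the two `R`-bounds then give
`C (C₀ K)^θ (C₁ K)^(1-θ) = C C₀^θ C₁^(1-θ) K`, where `K` is the `L_p` norm of `∑ εⱼ xⱼ`.
-/

open scoped BigOperators

noncomputable section

/-- The random sign (Rademacher variable) attached to a boolean vector `z` at coordinate `j`. -/
def radSign {N : ℕ} (z : Fin N → Bool) (j : Fin N) : ℝ := if z j then 1 else -1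

/-- Discrete (Rademacher) formulation of `R`-boundedness of an indexed family of operators
with constant `C` (Definition of Denk–Seiler; equivalent to the probabilistic one). -/
def RBoundedFamWith {X Y : Type*} [NormedAddCommGroup X] [NormedSpace ℂ X]
    [NormedAddCommGroup Y] [NormedSpace ℂ Y] {ι : Type*}
    (p : ℝ) (T : ι → (X →L[ℂ] Y)) (C : ℝ) : Prop :=
  ∀ (N : ℕ) (f : Fin N → ι) (x : Fin N → X),
    (∑ z : Fin N → Bool, ‖∑ j, radSign z j • (T (f j)) (x j)‖ ^ p) ^ (1 / p) ≤
      C * (∑ z : Fin N → Bool, ‖∑ j, radSign z j • x j‖ ^ p) ^ (1 / p)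

namespace Real

open Finset

variable {ι : Type*} (s : Finset ι) {θ : ℝ}

theorem sum_rpow_mul_rpow_one_sub_le (hθ₀ : 0 < θ) (hθ₁ : θ < 1) {u v : ι → ℝ}
    (hu : ∀ i ∈ s, 0 ≤ u i) (hv : ∀ i ∈ s, 0 ≤ v i) :
    ∑ i ∈ s, u i ^ θ * v i ^ (1 - θ) ≤ (∑ i ∈ s, u i) ^ θ * (∑ i ∈ s, v i) ^ (1 - θ) := by
  have hθ₁' : 1 - θ ≠ 0 := (sub_pos.2 hθ₁).ne'
  convert inner_le_Lp_mul_Lq_of_nonneg s (HolderConjugate.inv_one_sub_inv hθ₀ hθ₁)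
    (fun i hi => rpow_nonneg (hu i hi) θ) (fun i hi => rpow_nonneg (hv i hi) (1 - θ)) using 3
  · exact sum_congr rfl fun i hi => (rpow_rpow_inv (hu i hi) hθ₀.ne').symm
  · rw [one_div, inv_inv]
  · exact sum_congr rfl fun i hi => (rpow_rpow_inv (hv i hi) hθ₁').symm
  · rw [one_div, inv_inv]

theorem Lp_le_mul_Lp_rpow_mul_Lp_rpow (hθ₀ : 0 < θ) (hθ₁ : θ < 1) {p C : ℝ} (hp : 0 < p)
    (hC : 0 ≤ C) {a b c : ι → ℝ} (ha : ∀ i ∈ s, 0 ≤ a i) (hb : ∀ i ∈ s, 0 ≤ b i)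
    (hc : ∀ i ∈ s, 0 ≤ c i) (h : ∀ i ∈ s, a i ≤ C * b i ^ θ * c i ^ (1 - θ)) :
    (∑ i ∈ s, a i ^ p) ^ (1 / p) ≤
      C * ((∑ i ∈ s, b i ^ p) ^ (1 / p)) ^ θ * ((∑ i ∈ s, c i ^ p) ^ (1 / p)) ^ (1 - θ) := by
  have hB : 0 ≤ ∑ i ∈ s, b i ^ p := sum_nonneg fun i hi => rpow_nonneg (hb i hi) p
  have hD : 0 ≤ ∑ i ∈ s, c i ^ p := sum_nonneg fun i hi => rpow_nonneg (hc i hi) p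
  have hpow : ∀ i ∈ s, a i ^ p ≤ C ^ p * ((b i ^ p) ^ θ * (c i ^ p) ^ (1 - θ)) := by
    intro i hi
    have hb' := hb i hi
    have hc' := hc i hi
    calc a i ^ p ≤ (C * b i ^ θ * c i ^ (1 - θ)) ^ p := by gcongr; exacts [ha i hi, h i hi]
      _ = _ := by
        rw [mul_rpow (by positivity) (by positivity), mul_rpow hC (by positivity), mul_assoc,
          ← rpow_mul hb', ← rpow_mul hc', ← rpow_mul hb', ← rpow_mul hc', mul_comm θ,
          mul_comm (1 - θ)]
  have hsum : ∑ i ∈ s, a i ^ p ≤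
      C ^ p * ((∑ i ∈ s, b i ^ p) ^ θ * (∑ i ∈ s, c i ^ p) ^ (1 - θ)) := by
    calc ∑ i ∈ s, a i ^ p ≤ C ^ p * ∑ i ∈ s, (b i ^ p) ^ θ * (c i ^ p) ^ (1 - θ) := by
          rw [mul_sum]; exact sum_le_sum hpow
      _ ≤ _ := by
          gcongr
          exact sum_rpow_mul_rpow_one_sub_le s hθ₀ hθ₁ (fun i hi => rpow_nonneg (hb i hi) p)
            (fun i hi => rpow_nonneg (hc i hi) p)
  calc (∑ i ∈ s, a i ^ p) ^ (1 / p)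
      ≤ (C ^ p * ((∑ i ∈ s, b i ^ p) ^ θ * (∑ i ∈ s, c i ^ p) ^ (1 - θ))) ^ (1 / p) := by
        gcongr
        exact sum_nonneg fun i hi => rpow_nonneg (ha i hi) p
    _ = _ := by
        rw [mul_rpow (by positivity) (by positivity), mul_rpow (by positivity) (by positivity),
          one_div, rpow_rpow_inv hC hp.ne', ← rpow_mul hB, ← rpow_mul hD, ← rpow_mul hB,
          ← rpow_mul hD, mul_comm θ, mul_comm (1 - θ), mul_assoc]

end Real

/-- The `L_p(Ω; E)`-norm of `∑ εⱼ xⱼ`, with `Ω = Fin N → Bool` under counting measure rather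
than the uniform probability: the missing factor `2^(-N/p)` cancels in every `R`-bound. -/
def rademacherNorm {E : Type*} [NormedAddCommGroup E] [Module ℝ E] (p : ℝ) {N : ℕ}
    (x : Fin N → E) : ℝ :=
  (∑ z : Fin N → Bool, ‖∑ j, radSign z j • x j‖ ^ p) ^ (1 / p)

theorem rademacherNorm_nonneg {E : Type*} [NormedAddCommGroup E] [Module ℝ E] (p : ℝ) {N : ℕ}
    (x : Fin N → E) : 0 ≤ rademacherNorm p x :=
  Real.rpow_nonneg (Finset.sum_nonneg fun _ _ => Real.rpow_nonneg (norm_nonneg _) p) _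

section Rademacher

variable {E F G : Type*} [NormedAddCommGroup E] [NormedSpace ℂ E] [NormedAddCommGroup F]
  [NormedSpace ℂ F] [NormedAddCommGroup G] [NormedSpace ℂ G] {p : ℝ} {N : ℕ}

theorem rademacherNorm_map (A : E →L[ℂ] F) (x : Fin N → E) :
    rademacherNorm p (fun j => A (x j)) =
      (∑ z : Fin N → Bool, ‖A (∑ j, radSign z j • x j)‖ ^ p) ^ (1 / p) := by
  simp only [rademacherNorm, map_sum, A.map_smul_of_tower]

theorem rademacherNorm_map_le_of_interpolation {θ C : ℝ} (hθ₀ : 0 < θ) (hθ₁ : θ < 1)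
    (hp : 0 < p) (hC : 0 ≤ C) (A : E →L[ℂ] F) (B : E →L[ℂ] G)
    (hAB : ∀ y, ‖A y‖ ≤ C * ‖B y‖ ^ θ * ‖y‖ ^ (1 - θ)) (x : Fin N → E) :
    rademacherNorm p (fun j => A (x j)) ≤
      C * rademacherNorm p (fun j => B (x j)) ^ θ * rademacherNorm p x ^ (1 - θ) := by
  rw [rademacherNorm_map, rademacherNorm_map]
  exact Real.Lp_le_mul_Lp_rpow_mul_Lp_rpow _ hθ₀ hθ₁ hp hC (fun _ _ => norm_nonneg _)
    (fun _ _ => norm_nonneg _) (fun _ _ => norm_nonneg _) (fun _ _ => hAB _)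

end Rademacher

theorem rBounded_interpolation_general {X Y₀ Y₁ Ymid : Type*}
    [NormedAddCommGroup X] [NormedSpace ℂ X]
    [NormedAddCommGroup Y₀] [NormedSpace ℂ Y₀]
    [NormedAddCommGroup Y₁] [NormedSpace ℂ Y₁]
    [NormedAddCommGroup Ymid] [NormedSpace ℂ Ymid]
    (i₁ : Y₁ →L[ℂ] Ymid) (i₀ : Ymid →L[ℂ] Y₀)
    (θ C : ℝ) (hθ : θ ∈ Set.Ioo (0:ℝ) 1) (hC : 0 < C)
    (hinterp : ∀ y : Y₁, ‖i₁ y‖ ≤ C * ‖i₀ (i₁ y)‖ ^ θ * ‖y‖ ^ (1 - θ))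
    {ι : Type*} (T : ι → (X →L[ℂ] Y₁)) (p C₀ C₁ : ℝ) (hp : 1 ≤ p)
    (hC₀ : 0 ≤ C₀) (hC₁ : 0 ≤ C₁)
    (h₀ : RBoundedFamWith p (fun i => i₀.comp (i₁.comp (T i))) C₀)
    (h₁ : RBoundedFamWith p T C₁) :
    RBoundedFamWith p (fun i => i₁.comp (T i)) (C * C₀ ^ θ * C₁ ^ (1 - θ)) := by
  intro N f x
  obtain ⟨hθ₀, hθ₁⟩ := hθ
  set K := rademacherNorm p x
  have hK : 0 ≤ K := rademacherNorm_nonneg p x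
  calc rademacherNorm p (fun j => i₁ (T (f j) (x j)))
      ≤ C * rademacherNorm p (fun j => i₀ (i₁ (T (f j) (x j)))) ^ θ *
          rademacherNorm p (fun j => T (f j) (x j)) ^ (1 - θ) :=
        rademacherNorm_map_le_of_interpolation hθ₀ hθ₁ (by linarith) hC.le i₁ (i₀.comp i₁)
          hinterp _
    _ ≤ C * (C₀ * K) ^ θ * (C₁ * K) ^ (1 - θ) := by
        gcongr
        · exact Real.rpow_nonneg (rademacherNorm_nonneg p _) _
        · exact rademacherNorm_nonneg p _
        · exact h₀ N f x
        · exact rademacherNorm_nonneg p _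
        · exact h₁ N f x
    _ = C * C₀ ^ θ * C₁ ^ (1 - θ) * (K ^ θ * K ^ (1 - θ)) := by
        rw [Real.mul_rpow hC₀ hK, Real.mul_rpow hC₁ hK]; ring
    _ = C * C₀ ^ θ * C₁ ^ (1 - θ) * K := by
        rw [← Real.rpow_add' hK (by norm_num), add_sub_cancel, Real.rpow_one]

/-- interpolation of `R`-bounds. `Y₁ ⊆ Y ⊆ Y₀` are Banach spaces with continuous
dense injections (`i₁ : Y₁ → Y`, `i₀ : Y → Y₀`) satisfying an interpolation inequality; a family
of operators bounded into both `Y₀` and `Y₁` is `R`-bounded into `Y` with interpolated bound. -/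
theorem rBounded_interpolation {X Y₀ Y₁ Ymid : Type*}
    [NormedAddCommGroup X] [NormedSpace ℂ X] [CompleteSpace X]
    [NormedAddCommGroup Y₀] [NormedSpace ℂ Y₀] [CompleteSpace Y₀]
    [NormedAddCommGroup Y₁] [NormedSpace ℂ Y₁] [CompleteSpace Y₁]
    [NormedAddCommGroup Ymid] [NormedSpace ℂ Ymid] [CompleteSpace Ymid]
    (i₁ : Y₁ →L[ℂ] Ymid) (i₀ : Ymid →L[ℂ] Y₀)
    (hi₁ : Function.Injective i₁) (hi₀ : Function.Injective i₀)
    (hd₁ : DenseRange i₁) (hd₀ : DenseRange i₀)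
    (θ C : ℝ) (hθ : θ ∈ Set.Ioo (0:ℝ) 1) (hC : 0 < C)
    (hinterp : ∀ y : Y₁, ‖i₁ y‖ ≤ C * ‖i₀ (i₁ y)‖ ^ θ * ‖y‖ ^ (1 - θ))
    {ι : Type*} (T : ι → (X →L[ℂ] Y₁)) (p C₀ C₁ : ℝ) (hp : 1 ≤ p)
    (hC₀ : 0 ≤ C₀) (hC₁ : 0 ≤ C₁)
    (h₀ : RBoundedFamWith p (fun i => i₀.comp (i₁.comp (T i))) C₀)
    (h₁ : RBoundedFamWith p T C₁) :
    RBoundedFamWith p (fun i => i₁.comp (T i)) (C * C₀ ^ θ * C₁ ^ (1 - θ)) :=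
  rBounded_interpolation_general i₁ i₀ θ C hθ hC hinterp T p C₀ C₁ hp hC₀ hC₁ h₀ h₁
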